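/- arXiv:2604.03663 — 3 statements merged into one kernel-verified Lean document; each statement's English description precedes it below -/
import Mathlib

section
/- Let m ≥ 1 and T ≥ 2 be integers. For μ = (μ₁,…,μ_m) ∈ ℝ^m define (ψ_h(μ))_{h≥0} by ψ₀(μ) = 1 and ψ_h(μ) = ∑_{l=1}^{min(m,h)} μ_l ψ_{h−l}(μ), and define (p_t(μ))_{t≥1} by p_t(μ) = ∑_{l=1}^{t−1} μ_l p_{t−l}(μ) + t·μ_t for 1 ≤ t ≤ m (the sum being empty for t = 1) and p_t(μ) = ∑_{l=1}^m μ_l p_{t−l}(μ) for t > m. Then for every k ∈ {1,…,m} and every μ ∈ ℝ^m, the partial derivative with respect to μ_k of the function μ ↦ ∑_{t=1}^{T−1} ((T−t)/t)·p_t(μ) exists and equals ∑_{h=0}^{T−1−k} (T−k−h)·ψ_h(μ), where the right-hand sum is interpreted as 0 when k > T−1. -/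
/-!
With `A(z) = ∑ aₗ zˡ`, the recursions say `Ψ = 1/(1 - A)` and `P = z A'/(1 - A)`, hence
`pₜ = ∑ₗ l aₗ ψₜ₋ₗ`. Differentiating the recursion of `p` in `aₖ`, this identity is exactly what
makes `t ψₜ₋ₖ` satisfy the differentiated recursion, so `∂pₜ/∂aₖ = t ψₜ₋ₖ`; the weights
`(T - t)/t` then cancel the factor `t`. The AR(m) recursions are the case of the coefficient
sequence `μ` cut off after `m`.
-/

open Finset

namespace PriorARm

structure IsMACoeffs (a ψ : ℕ → ℝ) : Prop where
  zero : ψ 0 = 1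
  recurrence : ∀ h, 1 ≤ h → ψ h = ∑ l ∈ Icc 1 h, a l * ψ (h - l)

def IsPowerSums (a p : ℕ → ℝ) : Prop :=
  ∀ t, 1 ≤ t → p t = ∑ l ∈ Icc 1 (t - 1), a l * p (t - l) + t * a t

def powerSumDeriv (ψ : ℕ → ℝ) (k t : ℕ) : ℝ := if k ≤ t then t * ψ (t - k) else 0

variable {a ψ p : ℕ → ℝ}

theorem IsPowerSums.eq_sum_mul_maCoeffs (hψ : IsMACoeffs a ψ) (hp : IsPowerSums a p) :
    ∀ t, 1 ≤ t → p t = ∑ l ∈ Icc 1 t, l * a l * ψ (t - l) := by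
  intro t
  induction t using Nat.strong_induction_on with
  | _ t ih =>
  intro ht
  calc p t = ∑ l ∈ Icc 1 (t - 1), ∑ j ∈ Icc 1 (t - l), a l * (j * a j * ψ (t - l - j))
          + t * a t := by
        rw [hp t ht]
        congr 1
        refine sum_congr rfl fun l hl => ?_
        rw [mem_Icc] at hl
        rw [ih (t - l) (by omega) (by omega), mul_sum]
    _ = ∑ j ∈ Icc 1 (t - 1), j * a j * ∑ l ∈ Icc 1 (t - j), a l * ψ (t - j - l)
          + t * a t * ψ 0 := by
        rw [sum_comm' (t' := Icc 1 (t - 1)) (s' := fun j => Icc 1 (t - j))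
          (fun l j => by simp only [mem_Icc]; omega), hψ.zero, mul_one]
        congr 1
        refine sum_congr rfl fun j _ => ?_
        rw [mul_sum]
        exact sum_congr rfl fun l _ => by rw [Nat.sub_right_comm]; ring
    _ = ∑ l ∈ Icc 1 t, l * a l * ψ (t - l) := by
        obtain ⟨s, rfl⟩ := Nat.exists_eq_add_of_le' ht
        rw [sum_Icc_succ_top (by omega), Nat.add_sub_cancel, Nat.sub_self]
        congr 1
        refine sum_congr rfl fun j hj => ?_
        rw [mem_Icc] at hj
        rw [hψ.recurrence (s + 1 - j) (by omega)]

theorem sum_mul_powerSumDeriv (ψ : ℕ → ℝ) {k t : ℕ} (hk : 1 ≤ k) :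
    ∑ l ∈ Icc 1 (t - 1), a l * powerSumDeriv ψ k (t - l)
      = ∑ l ∈ Icc 1 (t - k), a l * (((t : ℝ) - l) * ψ (t - k - l)) := by
  simp only [powerSumDeriv, mul_ite, mul_zero, ← sum_filter]
  have hfilter : (Icc 1 (t - 1)).filter (fun l => k ≤ t - l) = Icc 1 (t - k) := by
    ext l; simp only [mem_filter, mem_Icc]; omega
  rw [hfilter]
  refine sum_congr rfl fun l hl => ?_
  rw [mem_Icc] at hl
  rw [Nat.cast_sub (by omega), Nat.sub_right_comm]

theorem powerSum_deriv_recurrence (hψ : IsMACoeffs a ψ) (hp : IsPowerSums a p) {k t : ℕ}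
    (hk : 1 ≤ k) (ht : 1 ≤ t) :
    ∑ l ∈ Icc 1 (t - 1), ((if l = k then 1 else 0) * p (t - l)
        + a l * powerSumDeriv ψ k (t - l))
      + t * (if t = k then 1 else 0)
      = powerSumDeriv ψ k t := by
  rw [sum_add_distrib, sum_mul_powerSumDeriv ψ hk]
  simp only [powerSumDeriv, ite_mul, one_mul, zero_mul, sum_ite_eq', mem_Icc]
  rcases lt_trichotomy k t with hkt | rfl | htk
  · rw [if_pos (by omega), if_neg (by omega), if_pos hkt.le, mul_zero, add_zero,
      hψ.recurrence (t - k) (by omega), hp.eq_sum_mul_maCoeffs hψ (t - k) (by omega), mul_sum,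
      ← sum_add_distrib]
    exact sum_congr rfl fun l _ => by ring
  · rw [if_neg (by omega)]
    simp [hψ.zero]
  · rw [if_neg (by omega), if_neg (by omega), if_neg (by omega),
      Icc_eq_empty_of_lt (by omega : t - k < 1)]
    simp

theorem hasDerivAt_update_apply {ι 𝕜 : Type*} [DecidableEq ι] [NontriviallyNormedField 𝕜]
    (v : ι → 𝕜) (k l : ι) (x : 𝕜) :
    HasDerivAt (fun y => Function.update v k y l) (if l = k then 1 else 0) x := by
  by_cases hlk : l = k
  · subst hlk
    simpa using hasDerivAt_id' x
  · simpa [hlk] using hasDerivAt_const x (v l)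

theorem hasDerivAt_powerSum (hψ : IsMACoeffs a ψ) {k : ℕ} (hk : 1 ≤ k) {P : ℝ → ℕ → ℝ}
    (hP : ∀ x, IsPowerSums (Function.update a k x) (P x)) :
    ∀ t, 1 ≤ t → HasDerivAt (fun x => P x t) (powerSumDeriv ψ k t) (a k) := by
  have hPa : IsPowerSums a (P (a k)) := by simpa using hP (a k)
  intro t
  induction t using Nat.strong_induction_on with
  | _ t ih =>
  intro ht
  have hfun : (fun x => P x t) = fun x => ∑ l ∈ Icc 1 (t - 1),
      Function.update a k x l * P x (t - l) + t * Function.update a k x t :=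
    funext fun x => hP x t ht
  have hsum := HasDerivAt.fun_sum fun l (hl : l ∈ Icc 1 (t - 1)) =>
    have hl := mem_Icc.1 hl
    (hasDerivAt_update_apply a k l (a k)).mul (ih (t - l) (by omega) (by omega))
  rw [hfun]
  refine (hsum.add ((hasDerivAt_update_apply a k t (a k)).const_mul (t : ℝ))).congr_deriv ?_
  simpa only [Function.update_eq_self] using powerSum_deriv_recurrence hψ hPa hk ht

theorem sum_Icc_div_mul_powerSumDeriv (ψ : ℕ → ℝ) {k : ℕ} (hk : 1 ≤ k) (T : ℕ) :
    ∑ t ∈ Icc 1 (T - 1), ((T : ℝ) - t) / t * powerSumDeriv ψ k t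
      = ∑ h ∈ range (T - k), ((T : ℝ) - k - h) * ψ h := by
  calc _ = ∑ t ∈ Icc 1 (T - 1), if k ≤ t then ((T : ℝ) - t) * ψ (t - k) else 0 := by
        refine sum_congr rfl fun t ht => ?_
        rw [mem_Icc] at ht
        rw [powerSumDeriv]
        have ht0 : (t : ℝ) ≠ 0 := by exact_mod_cast (show t ≠ 0 by omega)
        split_ifs
        · field_simp
        · rw [mul_zero]
    _ = ∑ t ∈ Ico k T, ((T : ℝ) - t) * ψ (t - k) := by
        rw [← sum_filter]
        congr 1
        ext t; simp only [mem_filter, mem_Icc, mem_Ico]; omega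
    _ = _ := by
        rw [sum_Ico_eq_sum_range]
        refine sum_congr rfl fun h _ => ?_
        rw [Nat.add_sub_cancel_left]
        push_cast
        ring

def truncCoeffs (m : ℕ) (μ : ℕ → ℝ) (l : ℕ) : ℝ := if l ≤ m then μ l else 0

theorem truncCoeffs_of_le {m l : ℕ} (μ : ℕ → ℝ) (hl : l ≤ m) : truncCoeffs m μ l = μ l :=
  if_pos hl

theorem truncCoeffs_update {m k : ℕ} (μ : ℕ → ℝ) (hk : k ≤ m) (x : ℝ) :
    truncCoeffs m (Function.update μ k x) = Function.update (truncCoeffs m μ) k x := by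
  ext l
  by_cases hlk : l = k
  · subst hlk
    simp [truncCoeffs, hk]
  · simp [truncCoeffs, hlk]

theorem sum_Icc_truncCoeffs_mul (m n : ℕ) (μ f : ℕ → ℝ) :
    ∑ l ∈ Icc 1 n, truncCoeffs m μ l * f l = ∑ l ∈ Icc 1 (min m n), μ l * f l := by
  simp only [truncCoeffs, ite_mul, zero_mul, ← sum_filter]
  congr 1
  ext l; simp only [mem_filter, mem_Icc, le_min_iff]; omega

theorem isMACoeffs_truncCoeffs {m : ℕ} {μ ψ : ℕ → ℝ} (hψ0 : ψ 0 = 1)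
    (hψ : ∀ h, 1 ≤ h → ψ h = ∑ l ∈ Icc 1 (min m h), μ l * ψ (h - l)) :
    IsMACoeffs (truncCoeffs m μ) ψ :=
  ⟨hψ0, fun h hh => by rw [sum_Icc_truncCoeffs_mul, hψ h hh]⟩

theorem isPowerSums_truncCoeffs {m : ℕ} {μ p : ℕ → ℝ}
    (hp1 : ∀ t, 1 ≤ t → t ≤ m → p t = ∑ l ∈ Icc 1 (t - 1), μ l * p (t - l) + t * μ t)
    (hp2 : ∀ t, m < t → p t = ∑ l ∈ Icc 1 m, μ l * p (t - l)) :
    IsPowerSums (truncCoeffs m μ) p := by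
  intro t ht
  rw [sum_Icc_truncCoeffs_mul]
  by_cases htm : t ≤ m
  · rw [min_eq_right (by omega), truncCoeffs_of_le μ htm, hp1 t ht htm]
  · rw [min_eq_left (by omega), truncCoeffs, if_neg htm, mul_zero, add_zero, hp2 t (by omega)]

end PriorARm

open PriorARm in
theorem prior_ARm_gradient_general (m T : ℕ)
    (ψ p : (ℕ → ℝ) → ℕ → ℝ)
    (hψ0 : ∀ μ : ℕ → ℝ, ψ μ 0 = 1)
    (hψ : ∀ (μ : ℕ → ℝ) (h : ℕ), 1 ≤ h →
      ψ μ h = ∑ l ∈ Finset.Icc 1 (min m h), μ l * ψ μ (h - l))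
    (hp1 : ∀ (μ : ℕ → ℝ) (t : ℕ), 1 ≤ t → t ≤ m →
      p μ t = ∑ l ∈ Finset.Icc 1 (t - 1), μ l * p μ (t - l) + (t : ℝ) * μ t)
    (hp2 : ∀ (μ : ℕ → ℝ) (t : ℕ), m < t →
      p μ t = ∑ l ∈ Finset.Icc 1 m, μ l * p μ (t - l))
    (k : ℕ) (hk1 : 1 ≤ k) (hkm : k ≤ m) (μ : ℕ → ℝ) :
    HasDerivAt
      (fun x : ℝ =>
        ∑ t ∈ Finset.Icc 1 (T - 1), (((T : ℝ) - t) / t) * p (Function.update μ k x) t)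
      (∑ h ∈ Finset.range (T - k), ((T : ℝ) - k - h) * ψ μ h) (μ k) := by
  have hderiv := hasDerivAt_powerSum (isMACoeffs_truncCoeffs (hψ0 μ) (hψ μ)) hk1
    (P := fun x => p (Function.update μ k x)) fun x => by
      rw [← truncCoeffs_update μ hkm]
      exact isPowerSums_truncCoeffs (hp1 _) (hp2 _)
  rw [truncCoeffs_of_le μ hkm] at hderiv
  refine (HasDerivAt.fun_sum fun t ht => (hderiv t (mem_Icc.1 ht).1).const_mul _).congr_deriv ?_
  exact sum_Icc_div_mul_powerSumDeriv (ψ μ) hk1 T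

/-- Gradient of the log of the bias-reducing Prior AR(m): with `ψ` the MA(∞) coefficients and
`p` the power sums (as functions of the AR coefficient vector `μ`, defined by their recursions),
for every `k ∈ {1,…,m}` the partial derivative in `μ_k` of
`μ ↦ ∑_{t=1}^{T−1} ((T−t)/t)·p_t(μ)` exists and equals `∑_{h=0}^{T−1−k} (T−k−h)·ψ_h(μ)`
(the empty sum being `0` when `k > T−1`). -/
theorem prior_ARm_gradient (m T : ℕ) (hm : 1 ≤ m) (hT : 2 ≤ T)
    (ψ p : (ℕ → ℝ) → ℕ → ℝ)
    (hψ0 : ∀ μ : ℕ → ℝ, ψ μ 0 = 1)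
    (hψ : ∀ (μ : ℕ → ℝ) (h : ℕ), 1 ≤ h →
      ψ μ h = ∑ l ∈ Finset.Icc 1 (min m h), μ l * ψ μ (h - l))
    (hp1 : ∀ (μ : ℕ → ℝ) (t : ℕ), 1 ≤ t → t ≤ m →
      p μ t = ∑ l ∈ Finset.Icc 1 (t - 1), μ l * p μ (t - l) + (t : ℝ) * μ t)
    (hp2 : ∀ (μ : ℕ → ℝ) (t : ℕ), m < t →
      p μ t = ∑ l ∈ Finset.Icc 1 m, μ l * p μ (t - l))
    (k : ℕ) (hk1 : 1 ≤ k) (hkm : k ≤ m) (μ : ℕ → ℝ) :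
    HasDerivAt
      (fun x : ℝ =>
        ∑ t ∈ Finset.Icc 1 (T - 1), (((T : ℝ) - t) / t) * p (Function.update μ k x) t)
      (∑ h ∈ Finset.range (T - k), ((T : ℝ) - k - h) * ψ μ h) (μ k) :=
  prior_ARm_gradient_general m T ψ p hψ0 hψ hp1 hp2 k hk1 hkm μ
end

section
/- Let m ≥ 1 be an integer. For μ = (μ₁,…,μ_m) ∈ ℝ^m define (ψ_h(μ))_{h≥0} by ψ₀(μ) = 1 and ψ_h(μ) = ∑_{l=1}^{min(m,h)} μ_l ψ_{h−l}(μ), and define (p_t(μ))_{t≥1} by p_t(μ) = ∑_{l=1}^{t−1} μ_l p_{t−l}(μ) + t·μ_t for 1 ≤ t ≤ m (the sum being empty for t = 1) and p_t(μ) = ∑_{l=1}^m μ_l p_{t−l}(μ) for t > m. Then for all integers t ≥ 1 and k ∈ {1,…,m}, the partial derivative ∂p_t/∂μ_k exists everywhere on ℝ^m and satisfies ∂p_t(μ)/∂μ_k = t·ψ_{t−k}(μ) if t ≥ k and ∂p_t(μ)/∂μ_k = 0 if t < k. -/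
/-!
Newton's identity `p_s = ∑_{l=1}^{min(m,s)} l μ_l ψ_{s-l}` follows from the two recursions by
strong induction, after swapping the resulting double sum and resumming the inner sum with the
recursion for `ψ`. Differentiating the recursion for `p_t` in `μ_k` and using the claimed
derivative `(t-l) ψ_{t-l-k}` for the earlier terms, the claim for `p_t` reduces to
`p_s + ∑_l μ_l (t - l) ψ_{s-l} = t ψ_s` with `s = t - k`, which is Newton's identity rewritten
with the recursion for `ψ_s`.
-/

open Finset

theorem sum_Icc_ite_le {M : Type*} [AddCommMonoid M] (f : ℕ → M) (a b : ℕ) :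
    ∑ l ∈ Icc 1 b, (if l ≤ a then f l else 0) = ∑ l ∈ Icc 1 (min a b), f l := by
  rw [← sum_filter]
  congr 1
  ext l
  simp only [mem_filter, mem_Icc]
  omega

theorem sum_Icc_min_pred_add_ite {M : Type*} [AddCommMonoid M] (g : ℕ → M) (m : ℕ) {s : ℕ}
    (hs : 1 ≤ s) :
    ∑ l ∈ Icc 1 (min m (s - 1)), g l + (if s ≤ m then g s else 0) =
      ∑ l ∈ Icc 1 (min m s), g l := by
  split_ifs with h
  · obtain ⟨s, rfl⟩ := Nat.exists_eq_add_of_le' hs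
    rw [min_eq_right h, min_eq_right (by omega), Nat.add_sub_cancel, sum_Icc_succ_top (by omega)]
  · rw [min_eq_left (by omega), min_eq_left (by omega), add_zero]

theorem hasDerivAt_update_apply {𝕜 ι : Type*} [NontriviallyNormedField 𝕜] [DecidableEq ι]
    (μ : ι → 𝕜) (k l : ι) (y : 𝕜) :
    HasDerivAt (fun x => Function.update μ k x l) (if l = k then 1 else 0) y := by
  split_ifs with h
  · subst h
    simpa only [Function.update_self] using hasDerivAt_id' y
  · simpa only [Function.update_of_ne h] using hasDerivAt_const y (μ l)

section Recursions

variable {R : Type*} [CommRing R] {m : ℕ} {μ ψ p : ℕ → R}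

theorem power_sum_rec
    (hp1 : ∀ t, 1 ≤ t → t ≤ m → p t = ∑ l ∈ Icc 1 (t - 1), μ l * p (t - l) + (t : R) * μ t)
    (hp2 : ∀ t, m < t → p t = ∑ l ∈ Icc 1 m, μ l * p (t - l)) {t : ℕ} (ht : 1 ≤ t) :
    p t = ∑ l ∈ Icc 1 (min m (t - 1)), μ l * p (t - l) + if t ≤ m then (t : R) * μ t else 0 := by
  split_ifs with h
  · rw [hp1 t ht h, min_eq_right (by omega)]
  · rw [hp2 t (by omega), min_eq_left (by omega), add_zero]

theorem power_sum_eq_sum_mul_ma_coeff (hψ0 : ψ 0 = 1)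
    (hψ : ∀ h, 1 ≤ h → ψ h = ∑ l ∈ Icc 1 (min m h), μ l * ψ (h - l))
    (hp : ∀ t, 1 ≤ t →
      p t = ∑ l ∈ Icc 1 (min m (t - 1)), μ l * p (t - l) + if t ≤ m then (t : R) * μ t else 0)
    {s : ℕ} (hs : 1 ≤ s) :
    p s = ∑ l ∈ Icc 1 (min m s), (l : R) * μ l * ψ (s - l) := by
  induction s using Nat.strong_induction_on with
  | _ s ih =>
  set n := min m (s - 1)
  have expand : ∀ l ∈ Icc 1 n, μ l * p (s - l) =
      ∑ j ∈ Icc 1 n, if l ≤ s - j then (j : R) * μ j * (μ l * ψ (s - j - l)) else 0 := by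
    intro l hl
    rw [mem_Icc] at hl
    calc μ l * p (s - l)
        = ∑ j ∈ Icc 1 n, if j ≤ s - l then (j : R) * μ j * (μ l * ψ (s - j - l)) else 0 := by
          rw [ih (s - l) (by omega) (by omega), mul_sum, sum_Icc_ite_le,
            show min (s - l) n = min m (s - l) by omega]
          exact sum_congr rfl fun j _ => by rw [Nat.sub_right_comm]; ring
      _ = _ := sum_congr rfl fun j _ => if_congr (by omega) rfl rfl
  have resum : ∀ j ∈ Icc 1 n, ∑ l ∈ Icc 1 n,
      (if l ≤ s - j then (j : R) * μ j * (μ l * ψ (s - j - l)) else 0) = j * μ j * ψ (s - j) := by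
    intro j hj
    rw [mem_Icc] at hj
    rw [sum_Icc_ite_le, ← mul_sum, show min (s - j) n = min m (s - j) by omega,
      ← hψ (s - j) (by omega)]
  calc p s = ∑ l ∈ Icc 1 n, μ l * p (s - l) + if s ≤ m then (s : R) * μ s else 0 := hp s hs
    _ = ∑ j ∈ Icc 1 n, (j : R) * μ j * ψ (s - j) +
          if s ≤ m then (s : R) * μ s * ψ (s - s) else 0 := by
      rw [sum_congr rfl expand, sum_comm, sum_congr rfl resum, Nat.sub_self, hψ0, mul_one]
    _ = _ := sum_Icc_min_pred_add_ite (fun j => (j : R) * μ j * ψ (s - j)) m hs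

theorem power_sum_add_sum_mul_eq (hψ0 : ψ 0 = 1)
    (hψ : ∀ h, 1 ≤ h → ψ h = ∑ l ∈ Icc 1 (min m h), μ l * ψ (h - l))
    (hp : ∀ t, 1 ≤ t →
      p t = ∑ l ∈ Icc 1 (min m (t - 1)), μ l * p (t - l) + if t ≤ m then (t : R) * μ t else 0)
    (c : R) {s : ℕ} (hs : 1 ≤ s) :
    p s + ∑ l ∈ Icc 1 (min m s), μ l * ((c - l) * ψ (s - l)) = c * ψ s := by
  rw [power_sum_eq_sum_mul_ma_coeff hψ0 hψ hp hs, hψ s hs, mul_sum, ← sum_add_distrib]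
  exact sum_congr rfl fun l _ => by ring

theorem power_sum_deriv_rec_eq (hψ0 : ψ 0 = 1)
    (hψ : ∀ h, 1 ≤ h → ψ h = ∑ l ∈ Icc 1 (min m h), μ l * ψ (h - l))
    (hp : ∀ t, 1 ≤ t →
      p t = ∑ l ∈ Icc 1 (min m (t - 1)), μ l * p (t - l) + if t ≤ m then (t : R) * μ t else 0)
    {k t : ℕ} (hk1 : 1 ≤ k) (hkm : k ≤ m) :
    ∑ l ∈ Icc 1 (min m (t - 1)), ((if l = k then 1 else 0) * p (t - l) +
        μ l * if k ≤ t - l then ((t - l : ℕ) : R) * ψ (t - l - k) else 0) +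
      (if t ≤ m then (t : R) * (if t = k then 1 else 0) else 0) =
      if k ≤ t then (t : R) * ψ (t - k) else 0 := by
  have hδ : ∑ l ∈ Icc 1 (min m (t - 1)), (if l = k then 1 else 0) * p (t - l) =
      if k < t then p (t - k) else 0 := by
    simp only [ite_mul, one_mul, zero_mul, sum_ite_eq', mem_Icc]
    exact if_congr (by omega) rfl rfl
  have hD : ∑ l ∈ Icc 1 (min m (t - 1)),
      μ l * (if k ≤ t - l then ((t - l : ℕ) : R) * ψ (t - l - k) else 0) =
      ∑ l ∈ Icc 1 (min m (t - k)), μ l * ((t - l) * ψ (t - k - l)) := by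
    calc _ = ∑ l ∈ Icc 1 (min m (t - 1)),
          if l ≤ t - k then μ l * (((t - l : ℕ) : R) * ψ (t - l - k)) else 0 :=
          sum_congr rfl fun l hl => by
            rw [mem_Icc] at hl
            rw [mul_ite, mul_zero]
            exact if_congr (by omega) rfl rfl
      _ = _ := by
        rw [sum_Icc_ite_le, show min (t - k) (min m (t - 1)) = min m (t - k) by omega]
        refine sum_congr rfl fun l hl => ?_
        rw [mem_Icc] at hl
        rw [Nat.cast_sub (by omega), Nat.sub_right_comm]
  rw [sum_add_distrib, hδ, hD]
  rcases lt_trichotomy k t with hlt | rfl | hgt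
  · rw [if_pos hlt, if_neg hlt.ne', mul_zero, ite_self, add_zero, if_pos hlt.le]
    exact power_sum_add_sum_mul_eq hψ0 hψ hp _ (by omega)
  · simp [hψ0, hkm]
  · simp [Nat.sub_eq_zero_of_le hgt.le, hgt.not_gt, hgt.not_ge, hgt.ne]

end Recursions

theorem hasDerivAt_power_sum_update {𝕜 : Type*} [NontriviallyNormedField 𝕜] {m : ℕ}
    {μ ψ : ℕ → 𝕜} {p : (ℕ → 𝕜) → ℕ → 𝕜} (hψ0 : ψ 0 = 1)
    (hψ : ∀ h, 1 ≤ h → ψ h = ∑ l ∈ Icc 1 (min m h), μ l * ψ (h - l))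
    (hp : ∀ ν t, 1 ≤ t → p ν t =
      ∑ l ∈ Icc 1 (min m (t - 1)), ν l * p ν (t - l) + if t ≤ m then (t : 𝕜) * ν t else 0)
    {k t : ℕ} (hk1 : 1 ≤ k) (hkm : k ≤ m) (ht : 1 ≤ t) :
    HasDerivAt (fun x => p (Function.update μ k x) t)
      (if k ≤ t then (t : 𝕜) * ψ (t - k) else 0) (μ k) := by
  induction t using Nat.strong_induction_on with
  | _ t ih =>
  have hrec : (fun x => p (Function.update μ k x) t) = fun x =>
      ∑ l ∈ Icc 1 (min m (t - 1)), Function.update μ k x l * p (Function.update μ k x) (t - l) +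
        if t ≤ m then (t : 𝕜) * Function.update μ k x t else 0 :=
    funext fun x => hp _ t ht
  rw [hrec, ← power_sum_deriv_rec_eq hψ0 hψ (hp μ) hk1 hkm]
  refine (HasDerivAt.fun_sum fun l hl => ?_).add ?_
  · rw [mem_Icc] at hl
    simpa only [Function.update_eq_self] using
      (hasDerivAt_update_apply μ k l (μ k)).fun_mul (ih (t - l) (by omega) (by omega))
  · by_cases htm : t ≤ m
    · simpa only [if_pos htm] using (hasDerivAt_update_apply μ k t (μ k)).const_mul (t : 𝕜)
    · simpa only [if_neg htm] using hasDerivAt_const (μ k) (0 : 𝕜)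

theorem power_sum_partial_derivative_general (m : ℕ)
    (ψ p : (ℕ → ℝ) → ℕ → ℝ)
    (hψ0 : ∀ μ : ℕ → ℝ, ψ μ 0 = 1)
    (hψ : ∀ (μ : ℕ → ℝ) (h : ℕ), 1 ≤ h →
      ψ μ h = ∑ l ∈ Finset.Icc 1 (min m h), μ l * ψ μ (h - l))
    (hp1 : ∀ (μ : ℕ → ℝ) (t : ℕ), 1 ≤ t → t ≤ m →
      p μ t = ∑ l ∈ Finset.Icc 1 (t - 1), μ l * p μ (t - l) + (t : ℝ) * μ t)
    (hp2 : ∀ (μ : ℕ → ℝ) (t : ℕ), m < t →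
      p μ t = ∑ l ∈ Finset.Icc 1 m, μ l * p μ (t - l))
    (t k : ℕ) (ht : 1 ≤ t) (hk1 : 1 ≤ k) (hkm : k ≤ m) (μ : ℕ → ℝ) :
    HasDerivAt (fun x : ℝ => p (Function.update μ k x) t)
      (if k ≤ t then (t : ℝ) * ψ μ (t - k) else 0) (μ k) :=
  hasDerivAt_power_sum_update (hψ0 μ) (hψ μ)
    (fun ν _ hs => power_sum_rec (hp1 ν) (hp2 ν) hs) hk1 hkm ht

/-- Differentiation of the power sums with respect to the AR coefficients: with `ψ` the MA(∞)
coefficients and `p` the power sums (as functions of the AR coefficient vector `μ`, defined by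
their recursions), for all `t ≥ 1` and `k ∈ {1,…,m}` the partial derivative `∂p_t/∂μ_k`
exists everywhere and equals `t·ψ_{t−k}(μ)` if `t ≥ k`, and `0` if `t < k`. -/
theorem power_sum_partial_derivative (m : ℕ) (hm : 1 ≤ m)
    (ψ p : (ℕ → ℝ) → ℕ → ℝ)
    (hψ0 : ∀ μ : ℕ → ℝ, ψ μ 0 = 1)
    (hψ : ∀ (μ : ℕ → ℝ) (h : ℕ), 1 ≤ h →
      ψ μ h = ∑ l ∈ Finset.Icc 1 (min m h), μ l * ψ μ (h - l))
    (hp1 : ∀ (μ : ℕ → ℝ) (t : ℕ), 1 ≤ t → t ≤ m →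
      p μ t = ∑ l ∈ Finset.Icc 1 (t - 1), μ l * p μ (t - l) + (t : ℝ) * μ t)
    (hp2 : ∀ (μ : ℕ → ℝ) (t : ℕ), m < t →
      p μ t = ∑ l ∈ Finset.Icc 1 m, μ l * p μ (t - l))
    (t k : ℕ) (ht : 1 ≤ t) (hk1 : 1 ≤ k) (hkm : k ≤ m) (μ : ℕ → ℝ) :
    HasDerivAt (fun x : ℝ => p (Function.update μ k x) t)
      (if k ≤ t then (t : ℝ) * ψ μ (t - k) else 0) (μ k) :=
  power_sum_partial_derivative_general m ψ p hψ0 hψ hp1 hp2 t k ht hk1 hkm μ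
end

section
/- Let (Ω, F, P) be a probability space, let σ > 0, and let (ε_t)_{t∈ℤ} be an independent family of square-integrable real random variables with E[ε_t] = 0 and E[ε_t²] = σ² for every t. Let (ψ_h)_{h≥0} be real numbers with ∑_{h=0}^∞ ψ_h² < ∞, and for each s ∈ ℤ let Ỹ_s denote the L²(P)-limit of ∑_{h=0}^H ψ_h ε_{s−h} as H → ∞. Then for all integers T ≥ 1 and k ≥ 1, ∑_{t=1}^T ∑_{τ=1}^T E[Ỹ_{τ−k} · ε_t] = σ²·∑_{h=0}^{T−k−1} (T−k−h)·ψ_h, where the right-hand sum is interpreted as 0 when k ≥ T. -/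
/-! Independence makes the noise orthogonal in `L²(P)` with `E[ε_s ε_t] = σ² 𝟙[s = t]`, so the
partial sum `∑_{h ≤ H} ψ_h ε_{s-h}` has moment `σ² ψ_{s-t}` against `ε_t` as soon as `H ≥ s - t`
(and `0` when `t > s`); continuity of the `L²` inner product passes this to the limit `Ỹ_s`.
In the double sum, the pair `(t, τ)` then contributes `σ² ψ_h` with `h = τ - k - t`, and exactly
`T - k - h` pairs of `[1, T]²` have a given `h ≥ 0`. -/

open MeasureTheory ProbabilityTheory Filter Finset

section

variable {Ω : Type*} [MeasurableSpace Ω] {P : Measure Ω}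

theorem integral_mul_eq_inner_toLp {f g : Ω → ℝ} (hf : MemLp f 2 P) (hg : MemLp g 2 P) :
    ∫ ω, f ω * g ω ∂P = inner ℝ (hf.toLp f) (hg.toLp g) := by
  rw [L2.inner_def]
  refine integral_congr_ae ?_
  filter_upwards [hf.coeFn_toLp, hg.coeFn_toLp] with ω hfω hgω
  simp [hfω, hgω, mul_comm]

theorem tendsto_integral_mul_of_tendsto_eLpNorm_sub {ι : Type*} {l : Filter ι}
    {F : ι → Ω → ℝ} {f g : Ω → ℝ} (hF : ∀ i, MemLp (F i) 2 P) (hf : MemLp f 2 P)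
    (hg : MemLp g 2 P) (hlim : Tendsto (fun i => eLpNorm (F i - f) 2 P) l (nhds 0)) :
    Tendsto (fun i => ∫ ω, F i ω * g ω ∂P) l (nhds (∫ ω, f ω * g ω ∂P)) := by
  have hLp := (Lp.tendsto_Lp_iff_tendsto_eLpNorm'' F hF f hf).mpr hlim
  simp only [integral_mul_eq_inner_toLp (hF _) hg, integral_mul_eq_inner_toLp hf hg]
  exact hLp.inner tendsto_const_nhds

theorem integral_mul_eq_ite_of_iIndepFun {ι : Type*} [DecidableEq ι] {ε : ι → Ω → ℝ}
    {v : ℝ} (hindep : iIndepFun ε P) (hmeas : ∀ i, AEStronglyMeasurable (ε i) P)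
    (hmean : ∀ i, ∫ ω, ε i ω ∂P = 0) (hvar : ∀ i, ∫ ω, ε i ω ^ 2 ∂P = v) (i j : ι) :
    ∫ ω, ε i ω * ε j ω ∂P = if i = j then v else 0 := by
  split_ifs with hij
  · subst hij
    simp_rw [← sq, hvar]
  · simpa [hmean] using (hindep.indepFun hij).integral_mul_eq_mul_integral (hmeas i) (hmeas j)

theorem integral_sum_mul_eq_of_le {ε : ℤ → Ω → ℝ} {v : ℝ} (hL2 : ∀ t, MemLp (ε t) 2 P)
    (horth : ∀ s t, ∫ ω, ε s ω * ε t ω ∂P = if s = t then v else 0) (ψ : ℕ → ℝ)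
    {s t : ℤ} {H : ℕ} (hH : (s - t).toNat ≤ H) :
    ∫ ω, (∑ h ∈ range (H + 1), ψ h * ε (s - h) ω) * ε t ω ∂P =
      if t ≤ s then v * ψ (s - t).toNat else 0 := by
  have hint : ∀ h ∈ range (H + 1), Integrable (fun ω => ψ h * (ε (s - h) ω * ε t ω)) P :=
    fun h _ => ((hL2 (s - h)).integrable_mul (hL2 t)).const_mul (ψ h)
  simp_rw [sum_mul, mul_assoc]
  rw [integral_finsetSum _ hint]
  simp_rw [integral_const_mul, horth]
  split_ifs with hts
  · have hsub : ∀ h : ℕ, s - h = t ↔ h = (s - t).toNat := fun h => by omega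
    simp_rw [hsub, mul_ite, mul_zero, sum_ite_eq', mem_range, Nat.lt_succ_of_le hH, if_true,
      mul_comm]
  · exact sum_eq_zero fun h _ => by rw [if_neg (by omega), mul_zero]

theorem integral_mul_eq_of_tendsto_eLpNorm {ε : ℤ → Ω → ℝ} {v : ℝ} (hL2 : ∀ t, MemLp (ε t) 2 P)
    (horth : ∀ s t, ∫ ω, ε s ω * ε t ω ∂P = if s = t then v else 0) (ψ : ℕ → ℝ)
    {Y : Ω → ℝ} (hY : MemLp Y 2 P) (s t : ℤ)
    (hlim : Tendsto (fun H : ℕ =>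
      eLpNorm (fun ω => (∑ h ∈ range (H + 1), ψ h * ε (s - h) ω) - Y ω) 2 P) atTop (nhds 0)) :
    ∫ ω, Y ω * ε t ω ∂P = if t ≤ s then v * ψ (s - t).toNat else 0 := by
  have hsum : ∀ H : ℕ, MemLp (fun ω => ∑ h ∈ range (H + 1), ψ h * ε (s - h) ω) 2 P :=
    fun H => memLp_finsetSum _ fun h _ => (hL2 (s - h)).const_mul (ψ h)
  refine tendsto_nhds_unique
    (tendsto_integral_mul_of_tendsto_eLpNorm_sub hsum hY (hL2 t) hlim) ?_
  refine tendsto_const_nhds.congr' ?_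
  filter_upwards [eventually_ge_atTop (s - t).toNat] with H hH
  exact (integral_sum_mul_eq_of_le hL2 horth ψ hH).symm

end

theorem sum_Icc_sum_Icc_ite_toNat {M : Type*} [AddCommMonoid M] (f : ℕ → M) (T k : ℕ) :
    ∑ t ∈ Icc (1 : ℤ) T, ∑ τ ∈ Icc (1 : ℤ) T, (if t ≤ τ - k then f (τ - k - t).toNat else 0) =
      ∑ h ∈ range (T - k), (T - k - h) • f h := by
  have hcount : ∀ h, (T - k - h) • f h = ∑ _j ∈ range (T - k - h), f h := fun h => by
    rw [sum_const, card_range]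
  simp_rw [hcount]
  rw [← sum_product', ← sum_filter, sum_sigma']
  refine sum_nbij' (fun p => ⟨(p.2 - k - p.1).toNat, (p.1 - 1).toNat⟩)
    (fun q => ((q.2 : ℤ) + 1, (q.2 : ℤ) + 1 + k + q.1)) ?_ ?_ ?_ ?_ ?_
  all_goals intro p hp
  all_goals simp only [mem_filter, mem_product, mem_Icc, mem_sigma, mem_range] at hp ⊢
  · omega
  · omega
  · ext <;> simp only <;> omega
  · obtain ⟨h, j⟩ := p
    simp only [Sigma.mk.injEq, heq_eq_eq] at hp ⊢
    omega

theorem ma_infty_double_sum_moment_general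
    {Ω : Type*} [MeasurableSpace Ω] (P : Measure Ω)
    (σ : ℝ) (ε : ℤ → Ω → ℝ)
    (hindep : iIndepFun ε P)
    (hL2 : ∀ t : ℤ, MemLp (ε t) 2 P)
    (hmean : ∀ t : ℤ, ∫ ω, ε t ω ∂P = 0)
    (hvar : ∀ t : ℤ, ∫ ω, (ε t ω) ^ 2 ∂P = σ ^ 2)
    (ψ : ℕ → ℝ)
    (Y : ℤ → Ω → ℝ) (hYL2 : ∀ s : ℤ, MemLp (Y s) 2 P)
    (hYlim : ∀ s : ℤ, Tendsto
      (fun H : ℕ =>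
        eLpNorm (fun ω => (∑ h ∈ Finset.range (H + 1), ψ h * ε (s - h) ω) - Y s ω) 2 P)
      atTop (nhds 0))
    (T k : ℕ) :
    ∑ t ∈ Finset.Icc (1 : ℤ) T, ∑ τ ∈ Finset.Icc (1 : ℤ) T,
        ∫ ω, Y (τ - k) ω * ε t ω ∂P =
      σ ^ 2 * ∑ h ∈ Finset.range (T - k), ((T : ℝ) - k - h) * ψ h := by
  have horth := integral_mul_eq_ite_of_iIndepFun hindep (fun t => (hL2 t).1) hmean hvar
  have hmoment (s t : ℤ) : ∫ ω, Y s ω * ε t ω ∂P = if t ≤ s then σ ^ 2 * ψ (s - t).toNat else 0 :=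
    integral_mul_eq_of_tendsto_eLpNorm hL2 horth ψ (hYL2 s) s t (hYlim s)
  simp_rw [hmoment]
  rw [sum_Icc_sum_Icc_ite_toNat (fun h => σ ^ 2 * ψ h), mul_sum]
  refine sum_congr rfl fun h hh => ?_
  rw [nsmul_eq_mul, Nat.cast_sub (by grind), Nat.cast_sub (by grind)]
  ring

/-- MA(∞) double-sum moment identity: with `(ε_t)_{t∈ℤ}` independent, square-integrable,
centered with common variance `σ²`, `(ψ_h)` square-summable, and `Ỹ_s` the `L²(P)`-limit of
the partial sums `∑_{h=0}^H ψ_h ε_{s−h}`, for all integers `T ≥ 1` and `k ≥ 1`,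
`∑_{t=1}^T ∑_{τ=1}^T E[Ỹ_{τ−k}·ε_t] = σ²·∑_{h=0}^{T−k−1} (T−k−h)·ψ_h`
(the right-hand sum being `0` when `k ≥ T`). -/
theorem ma_infty_double_sum_moment
    {Ω : Type*} [MeasurableSpace Ω] (P : Measure Ω) [IsProbabilityMeasure P]
    (σ : ℝ) (hσ : 0 < σ) (ε : ℤ → Ω → ℝ)
    (hmeas : ∀ t : ℤ, Measurable (ε t))
    (hindep : iIndepFun ε P)
    (hL2 : ∀ t : ℤ, MemLp (ε t) 2 P)
    (hmean : ∀ t : ℤ, ∫ ω, ε t ω ∂P = 0)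
    (hvar : ∀ t : ℤ, ∫ ω, (ε t ω) ^ 2 ∂P = σ ^ 2)
    (ψ : ℕ → ℝ) (hψ : Summable (fun h : ℕ => ψ h ^ 2))
    (Y : ℤ → Ω → ℝ) (hYL2 : ∀ s : ℤ, MemLp (Y s) 2 P)
    (hYlim : ∀ s : ℤ, Tendsto
      (fun H : ℕ =>
        eLpNorm (fun ω => (∑ h ∈ Finset.range (H + 1), ψ h * ε (s - h) ω) - Y s ω) 2 P)
      atTop (nhds 0))
    (T k : ℕ) (hT : 1 ≤ T) (hk : 1 ≤ k) :
    ∑ t ∈ Finset.Icc (1 : ℤ) T, ∑ τ ∈ Finset.Icc (1 : ℤ) T,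
        ∫ ω, Y (τ - k) ω * ε t ω ∂P =
      σ ^ 2 * ∑ h ∈ Finset.range (T - k), ((T : ℝ) - k - h) * ψ h :=
  ma_infty_double_sum_moment_general P σ ε hindep hL2 hmean hvar ψ Y hYL2 hYlim T k
end
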